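/- arXiv:2410.17611 — 3 statements merged into one kernel-verified Lean document; each statement's English description precedes it below -/
import Mathlib

section
/- For r ≥ 2, the total general position number and the dual general position number of GT(r) are both 0; i.e., the only total (resp. dual) general position set of GT(r) is the empty set. -/
open SimpleGraph

/-- Two vertices `u` and `v` are `S`-visible: there exists a shortest `u,v`-path
whose intersection with `S` is contained in `{u, v}`. -/
def isVisible {V : Type*} (G : SimpleGraph V) (S : Set V) (u v : V) : Prop :=
  ∃ p : G.Walk u v, p.IsPath ∧ p.length = G.dist u v ∧
    ∀ w ∈ p.support, w ∈ S → w = u ∨ w = v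

/-- Two vertices `u` and `v` are `S`-positionable: every shortest `u,v`-path
has its intersection with `S` contained in `{u, v}`. -/
def isPositionable {V : Type*} (G : SimpleGraph V) (S : Set V) (u v : V) : Prop :=
  ∀ p : G.Walk u v, p.IsPath → p.length = G.dist u v →
    ∀ w ∈ p.support, w ∈ S → w = u ∨ w = v

def isMVSet {V : Type*} (G : SimpleGraph V) (S : Set V) : Prop :=
  ∀ u ∈ S, ∀ v ∈ S, isVisible G S u v

def isOuterMVSet {V : Type*} (G : SimpleGraph V) (S : Set V) : Prop :=
  isMVSet G S ∧ ∀ u ∈ S, ∀ v ∉ S, isVisible G S u v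

def isDualMVSet {V : Type*} (G : SimpleGraph V) (S : Set V) : Prop :=
  isMVSet G S ∧ ∀ u ∉ S, ∀ v ∉ S, isVisible G S u v

def isTotalMVSet {V : Type*} (G : SimpleGraph V) (S : Set V) : Prop :=
  ∀ u v : V, isVisible G S u v

def isGPSet {V : Type*} (G : SimpleGraph V) (S : Set V) : Prop :=
  ∀ u ∈ S, ∀ v ∈ S, isPositionable G S u v

def isOuterGPSet {V : Type*} (G : SimpleGraph V) (S : Set V) : Prop :=
  isGPSet G S ∧ ∀ u ∈ S, ∀ v ∉ S, isPositionable G S u v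

def isDualGPSet {V : Type*} (G : SimpleGraph V) (S : Set V) : Prop :=
  isGPSet G S ∧ ∀ u ∉ S, ∀ v ∉ S, isPositionable G S u v

def isTotalGPSet {V : Type*} (G : SimpleGraph V) (S : Set V) : Prop :=
  ∀ u v : V, isPositionable G S u v

/-- Vertices of the generalized glued `t`-ary tree obtained from `n` copies of
the perfect `t`-ary tree of depth `r`: an internal vertex of copy `i` is encoded
as the list of child-choices from the root (length `< r`), and a quasi-leaf
(identified leaf) is encoded as such a list of length exactly `r`. -/
abbrev gluedVert (r n t : ℕ) : Type :=
  (Fin n × {l : List (Fin t) // l.length < r}) ⊕ {l : List (Fin t) // l.length = r}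

def gluedAdj (r n t : ℕ) : gluedVert r n t → gluedVert r n t → Prop
  | Sum.inl (i, s), Sum.inl (j, s') => i = j ∧ ∃ b, s'.val = s.val ++ [b]
  | Sum.inl (_, s), Sum.inr l => ∃ b, l.val = s.val ++ [b]
  | Sum.inr _, _ => False

/-- The generalized glued `t`-ary tree on `n` copies of the perfect `t`-ary tree
of depth `r`.  `gluedTree r 2 2` is the glued binary tree `GT(r)`,
`gluedTree r 2 t` is the glued `t`-ary tree `GT(r,t)`, and `gluedTree r n 2`
is the generalized glued binary tree `GT_r^(n)`. -/
def gluedTree (r n t : ℕ) : SimpleGraph (gluedVert r n t) :=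
  SimpleGraph.fromRel (gluedAdj r n t)

/-- The set of quasi-leaves. -/
def quasiLeaves (r n t : ℕ) : Set (gluedVert r n t) := {x | ∃ l, x = Sum.inr l}

/-- The vertex set of the `i`-th copy `T_r^(i)` of the perfect `t`-ary tree
(its internal vertices together with all quasi-leaves). -/
def copySet (r n t : ℕ) (i : Fin n) : Set (gluedVert r n t) :=
  {x | (∃ s, x = Sum.inl (i, s)) ∨ x ∈ quasiLeaves r n t}

/-! In a dual general position set `S`, a vertex `x ∈ S` forces exactly one end of every induced
path `a - x - c` into `S`: both ends in `S` contradicts general position, neither contradicts the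
positionability of `a, c ∉ S`. So `x ∈ S` cannot have three pairwise nonadjacent neighbours, which
rules out every vertex of `GT(r)` except the two roots and the quasi-leaves. A root in `S` would put
one of its children into `S`, a quasi-leaf one of its two parents, and for `r ≥ 2` these are
vertices of the first kind. A total general position set is in particular a dual one. -/

section GeneralPosition

variable {V : Type*} {G : SimpleGraph V} {S : Set V}

lemma isPositionable.notMem_of_adj_of_adj {a x c : V} (hpos : isPositionable G S a c)
    (hax : G.Adj a x) (hxc : G.Adj x c) (hac : a ≠ c) (hnadj : ¬ G.Adj a c) : x ∉ S := by
  intro hx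
  let p : G.Walk a c := .cons hax (.cons hxc .nil)
  have hpath : p.IsPath := by simp [p, hax.ne, hxc.ne, hac]
  have hdist : G.dist a c = 2 := by
    have hle : G.dist a c ≤ 2 := dist_le p
    have hpos : 0 < G.dist a c := Reachable.pos_dist_of_ne ⟨p⟩ hac
    have hne : G.dist a c ≠ 1 := fun h => hnadj (dist_eq_one_iff_adj.mp h)
    omega
  rcases hpos p hpath (by rw [hdist]; rfl) x (by simp [p]) hx with h | h
  exacts [hax.ne h.symm, hxc.ne h]

lemma isTotalGPSet.isDualGPSet (hS : isTotalGPSet G S) : isDualGPSet G S :=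
  ⟨fun u _ v _ => hS u v, fun u _ v _ => hS u v⟩

variable (hS : isDualGPSet G S) {x : V} (hx : x ∈ S)
include hS hx

lemma isDualGPSet.mem_or_mem_of_adj_of_adj {a c : V} (hax : G.Adj a x) (hxc : G.Adj x c)
    (hac : a ≠ c) (hnadj : ¬ G.Adj a c) : a ∈ S ∨ c ∈ S := by
  by_contra! h
  exact (hS.2 a h.1 c h.2).notMem_of_adj_of_adj hax hxc hac hnadj hx

lemma isDualGPSet.not_both_mem_of_adj_of_adj {a c : V} (hax : G.Adj a x) (hxc : G.Adj x c)
    (hac : a ≠ c) (hnadj : ¬ G.Adj a c) : ¬ (a ∈ S ∧ c ∈ S) :=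
  fun h => (hS.1 a h.1 c h.2).notMem_of_adj_of_adj hax hxc hac hnadj hx

lemma isDualGPSet.false_of_three_adj {a b c : V} (ha : G.Adj a x) (hb : G.Adj x b)
    (hc : G.Adj x c) (hab : a ≠ b) (hac : a ≠ c) (hbc : b ≠ c) (nab : ¬ G.Adj a b)
    (nac : ¬ G.Adj a c) (nbc : ¬ G.Adj b c) : False := by
  have := hS.mem_or_mem_of_adj_of_adj hx ha hb hab nab
  have := hS.mem_or_mem_of_adj_of_adj hx ha hc hac nac
  have := hS.mem_or_mem_of_adj_of_adj hx hb.symm hc hbc nbc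
  have := hS.not_both_mem_of_adj_of_adj hx ha hb hab nab
  have := hS.not_both_mem_of_adj_of_adj hx ha hc hac nac
  have := hS.not_both_mem_of_adj_of_adj hx hb.symm hc hbc nbc
  tauto

end GeneralPosition

namespace gluedTree

variable {r n t : ℕ}

def word : gluedVert r n t → List (Fin t)
  | .inl (_, s) => s.val
  | .inr l => l.val

lemma word_of_gluedAdj {x y : gluedVert r n t} (h : gluedAdj r n t x y) :
    ∃ b, word y = word x ++ [b] := by
  match x, y, h with
  | .inl _, .inl _, ⟨_, b, hb⟩ => exact ⟨b, hb⟩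
  | .inl _, .inr _, ⟨b, hb⟩ => exact ⟨b, hb⟩

lemma length_word_of_adj {x y : gluedVert r n t} (h : (gluedTree r n t).Adj x y) :
    (word y).length = (word x).length + 1 ∨ (word x).length = (word y).length + 1 := by
  rcases (fromRel_adj _ _ _).mp h with ⟨-, h | h⟩
  · obtain ⟨b, hb⟩ := word_of_gluedAdj h
    simp [hb]
  · obtain ⟨b, hb⟩ := word_of_gluedAdj h
    simp [hb]

lemma not_adj_of_length_word {x y : gluedVert r n t}
    (h₁ : (word y).length ≠ (word x).length + 1) (h₂ : (word x).length ≠ (word y).length + 1) :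
    ¬ (gluedTree r n t).Adj x y :=
  fun h => (length_word_of_adj h).elim h₁ h₂

lemma adj_inl_inl {i : Fin n} {s s' : {l : List (Fin t) // l.length < r}} {b : Fin t}
    (hb : s'.val = s.val ++ [b]) : (gluedTree r n t).Adj (.inl (i, s)) (.inl (i, s')) := by
  refine (fromRel_adj _ _ _).mpr ⟨fun h => ?_, .inl ⟨rfl, b, hb⟩⟩
  simpa [show s = s' by simp_all] using congrArg List.length hb

lemma adj_inl_inr {i : Fin n} {s : {l : List (Fin t) // l.length < r}}
    {l : {l : List (Fin t) // l.length = r}} {b : Fin t} (hb : l.val = s.val ++ [b]) :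
    (gluedTree r n t).Adj (.inl (i, s)) (.inr l) :=
  (fromRel_adj _ _ _).mpr ⟨Sum.inl_ne_inr, .inl ⟨b, hb⟩⟩

lemma exists_adj_word_eq_append (i : Fin n) (s : {l : List (Fin t) // l.length < r}) (b : Fin t) :
    ∃ y, (gluedTree r n t).Adj (.inl (i, s)) y ∧ word y = s.val ++ [b] := by
  rcases (Nat.succ_le_of_lt s.2).lt_or_eq with h | h
  · exact ⟨.inl (i, ⟨s.val ++ [b], by simpa using h⟩), adj_inl_inl rfl, rfl⟩
  · exact ⟨.inr ⟨s.val ++ [b], by simpa using h⟩, adj_inl_inr rfl, rfl⟩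

variable [Nontrivial (Fin t)] {S : Set (gluedVert r n t)} (hS : isDualGPSet (gluedTree r n t) S)
include hS

lemma notMem_inl_of_ne_nil (i : Fin n) (s : {l : List (Fin t) // l.length < r})
    (hs : s.val ≠ []) : .inl (i, s) ∉ S := by
  intro hx
  obtain ⟨b₀, b₁, hb⟩ := exists_pair_ne (Fin t)
  obtain ⟨c₀, hc₀, hw₀⟩ := exists_adj_word_eq_append i s b₀
  obtain ⟨c₁, hc₁, hw₁⟩ := exists_adj_word_eq_append i s b₁
  let p : gluedVert r n t := .inl (i, ⟨s.val.dropLast, by simpa using Nat.sub_lt_of_lt s.2⟩)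
  have hp : (gluedTree r n t).Adj p (.inl (i, s)) :=
    adj_inl_inl (List.dropLast_append_getLast hs).symm
  have hlen : 0 < s.val.length := List.length_pos_iff.mpr hs
  have hwp : (word p).length = s.val.length - 1 := by simp [p, word]
  have hl₀ : (word c₀).length = s.val.length + 1 := by simp [hw₀]
  have hl₁ : (word c₁).length = s.val.length + 1 := by simp [hw₁]
  refine hS.false_of_three_adj hx hp hc₀ hc₁ ?_ ?_ ?_ ?_ ?_ ?_
  · exact fun h => by simp [h] at hwp; omega
  · exact fun h => by simp [h] at hwp; omega
  · exact fun h => hb (by simpa [hw₀, hw₁] using congrArg word h)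
  all_goals exact not_adj_of_length_word (by omega) (by omega)

lemma notMem_root (hr : 2 ≤ r) (i : Fin n) (s : {l : List (Fin t) // l.length < r})
    (hs : s.val = []) : .inl (i, s) ∉ S := by
  intro hx
  obtain ⟨b₀, b₁, hb⟩ := exists_pair_ne (Fin t)
  have hlt : ∀ b : Fin t, [b].length < r := fun _ => by simp; omega
  have hc : ∀ b, (gluedTree r n t).Adj (.inl (i, s)) (.inl (i, ⟨[b], hlt b⟩)) :=
    fun b => adj_inl_inl (b := b) (by simp [hs])
  have hne : (.inl (i, ⟨[b₀], hlt b₀⟩) : gluedVert r n t) ≠ .inl (i, ⟨[b₁], hlt b₁⟩) :=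
    fun h => hb (by simpa using h)
  rcases hS.mem_or_mem_of_adj_of_adj hx (hc b₀).symm (hc b₁) hne
    (not_adj_of_length_word (by simp [word]) (by simp [word])) with h | h
  exacts [notMem_inl_of_ne_nil hS i _ (by simp) h, notMem_inl_of_ne_nil hS i _ (by simp) h]

lemma notMem_inr [Nontrivial (Fin n)] (hr : 2 ≤ r) (l : {l : List (Fin t) // l.length = r}) :
    .inr l ∉ S := by
  intro hx
  obtain ⟨i₀, i₁, hi⟩ := exists_pair_ne (Fin n)
  have hl : l.val ≠ [] := List.ne_nil_of_length_pos (by omega)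
  let s : {l : List (Fin t) // l.length < r} := ⟨l.val.dropLast, by simp; omega⟩
  have hp : ∀ i, (gluedTree r n t).Adj (.inl (i, s)) (.inr l) :=
    fun _ => adj_inl_inr (List.dropLast_append_getLast hl).symm
  have hne : (.inl (i₀, s) : gluedVert r n t) ≠ .inl (i₁, s) := fun h => hi (by simpa using h)
  have hs : s.val ≠ [] := List.ne_nil_of_length_pos (by simp [s]; omega)
  rcases hS.mem_or_mem_of_adj_of_adj hx (hp i₀) (hp i₁).symm hne
    (not_adj_of_length_word (by simp [word]) (by simp [word])) with h | h
  exacts [notMem_inl_of_ne_nil hS _ s hs h, notMem_inl_of_ne_nil hS _ s hs h]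

lemma eq_empty [Nontrivial (Fin n)] (hr : 2 ≤ r) : S = ∅ := by
  refine Set.eq_empty_of_forall_notMem ?_
  rintro (⟨i, s⟩ | l)
  · by_cases hs : s.val = []
    exacts [notMem_root hS hr i s hs, notMem_inl_of_ne_nil hS i s hs]
  · exact notMem_inr hS hr l

end gluedTree

theorem stmt13 (r : ℕ) (hr : 2 ≤ r) :
    (∀ S : Set (gluedVert r 2 2), isTotalGPSet (gluedTree r 2 2) S → S = ∅) ∧
    (∀ S : Set (gluedVert r 2 2), isDualGPSet (gluedTree r 2 2) S → S = ∅) :=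
  ⟨fun _ hS => gluedTree.eq_empty hS.isDualGPSet hr, fun _ hS => gluedTree.eq_empty hS hr⟩
end

section
/- If G is a connected graph and X ⊆ V(G), then X is a total general position set of G if and only if every vertex of X is simplicial in G. -/
open SimpleGraph

namespace SimpleGraph

variable {V : Type*} {G : SimpleGraph V}

def IsSimplicial (G : SimpleGraph V) (v : V) : Prop :=
  G.IsClique (G.neighborSet v)

lemma dist_eq_two_of_adj_of_adj {a v b : V} (hav : G.Adj a v) (hvb : G.Adj v b) (hab : a ≠ b)
    (hnadj : ¬G.Adj a b) : G.dist a b = 2 := by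
  have hcommon : (G.commonNeighbors a b).Nonempty :=
    ⟨v, (G.mem_commonNeighbors).mpr ⟨hav, hvb.symm⟩⟩
  rw [dist, edist_eq_two_iff.mpr ⟨hab, hnadj, hcommon⟩]
  rfl

/-- Two non-adjacent neighbours `a`, `b` of `v` would make `a, v, b` a shortest path through `v`. -/
lemma isSimplicial_of_isTotalGPSet {X : Set V} (hX : isTotalGPSet G X) {v : V} (hv : v ∈ X) :
    G.IsSimplicial v := by
  intro a (hva : G.Adj v a) b (hvb : G.Adj v b) hab
  by_contra hnadj
  let p : G.Walk a b := .cons hva.symm (.cons hvb .nil)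
  have hpath : p.IsPath := by simp [p, Walk.isPath_def, hva.ne', hvb.ne, hab]
  have hlen : p.length = G.dist a b := (dist_eq_two_of_adj_of_adj hva.symm hvb hab hnadj).symm
  rcases hX a b p hpath hlen v (by simp [p]) hv with h | h
  · exact hva.ne h
  · exact hvb.ne h

namespace Walk

lemma exists_adj_adj_of_mem_support {u v w : V} (p : G.Walk u v) (hw : w ∈ p.support)
    (hwu : w ≠ u) (hwv : w ≠ v) :
    ∃ (a b : V) (q : G.Walk u a) (r : G.Walk b v), G.Adj a w ∧ G.Adj w b ∧
      p.length = q.length + r.length + 2 := by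
  classical
  obtain ⟨b, hwb, r, hr⟩ := (p.dropUntil w hw).exists_eq_cons_of_ne hwv
  obtain ⟨a, hwa, q, hq⟩ := (p.takeUntil w hw).reverse.exists_eq_cons_of_ne hwu
  refine ⟨a, b, q.reverse, r, hwa.symm, hwb, ?_⟩
  have hsplit := congrArg length (p.take_spec hw)
  have hqlen := congrArg length hq
  have hrlen := congrArg length hr
  simp only [length_append, length_reverse, length_cons] at hsplit hqlen hrlen ⊢
  omega

/-- The two neighbours of `w` on the walk are distinct and non-adjacent, since otherwise the walk
could be shortened by two, resp. one, edges. -/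
lemma not_isSimplicial_of_length_eq_dist {u v w : V} (p : G.Walk u v)
    (hp : p.length = G.dist u v) (hw : w ∈ p.support) (hwu : w ≠ u) (hwv : w ≠ v) :
    ¬G.IsSimplicial w := by
  intro hsimp
  obtain ⟨a, b, q, r, haw, hwb, hlen⟩ := p.exists_adj_adj_of_mem_support hw hwu hwv
  by_cases hab : a = b
  · subst hab
    have := dist_le (q.append r)
    simp only [length_append] at this
    omega
  · have := dist_le (q.append (.cons (hsimp haw.symm hwb hab) r))
    simp only [length_append, length_cons] at this
    omega

end Walk

end SimpleGraph

theorem stmt14_general {V : Type*} (G : SimpleGraph V) (X : Set V) :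
    isTotalGPSet G X ↔
      ∀ v ∈ X, ∀ a ∈ G.neighborSet v, ∀ b ∈ G.neighborSet v, a ≠ b → G.Adj a b := by
  refine ⟨fun hX v hv => isSimplicial_of_isTotalGPSet hX hv, ?_⟩
  intro hX u v p _ hp w hw hwX
  by_contra! hwuv
  exact p.not_isSimplicial_of_length_eq_dist hp hw hwuv.1 hwuv.2 (hX w hwX)

theorem stmt14 {V : Type*} (G : SimpleGraph V) (hG : G.Connected) (X : Set V) :
    isTotalGPSet G X ↔
      ∀ v ∈ X, ∀ a ∈ G.neighborSet v, ∀ b ∈ G.neighborSet v, a ≠ b → G.Adj a b :=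
  stmt14_general G X
end

section
/- For r ≥ 2 and t ≥ 2, the mutual-visibility number of the glued t-ary tree GT(r,t) equals t^r + 1, and the number of maximum mutual-visibility sets equals the number of non-quasi-leaf vertices, namely 2·(t^r − 1)/(t − 1). -/
open SimpleGraph

/-!
Label every vertex by its word, the path from the root of its copy. One copy together with the
quasi-leaves is the tree of words of length at most `r`; distances between its vertices are tree
distances, a shortest walk from an internal vertex is the tree path and hence unique, and a
shortest walk between two quasi-leaves steps into one copy and then follows the tree path there.
So in a mutual-visibility set `S` no internal vertex lies on the tree path from another internal
vertex of its copy to a vertex of `S` in that copy, and no two quasi-leaves of `S` have internal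
vertices of `S` from both copies on the tree path between them. Counting the leaves below
internal vertices then shows that `S` has at most `t ^ r` vertices once it has two internal ones.
Hence `μ = t ^ r + 1`, attained exactly by the quasi-leaves together with one internal vertex `v`,
and these are mutual-visibility sets since `v` obstructs only its own copy.
-/

namespace GluedTree

theorem take_eq_take_of_prefix {α : Type*} {b c : List α} {n : ℕ} (h : c <+: b)
    (hn : n ≤ c.length) : c.take n = b.take n := by
  obtain ⟨d, rfl⟩ := h
  simp [List.take_append_of_le_length hn]

theorem length_lt_of_prefix_of_ne {α : Type*} {a b : List α} (h : a <+: b) (hne : a ≠ b) :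
    a.length < b.length :=
  lt_of_le_of_ne h.length_le fun he => hne (h.eq_of_length he)

section Lcp

variable {α : Type*} [DecidableEq α]

/-- The length of the longest common prefix. -/
def lcp : List α → List α → ℕ
  | a :: x, b :: y => if a = b then lcp x y + 1 else 0
  | _, _ => 0

theorem le_lcp_iff {n : ℕ} {a b : List α} :
    n ≤ lcp a b ↔ n ≤ a.length ∧ n ≤ b.length ∧ a.take n = b.take n := by
  induction a generalizing b n with
  | nil => cases n <;> simp [lcp]
  | cons x a ih =>
    cases b with
    | nil => cases n <;> simp [lcp]
    | cons y b =>
      cases n with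
      | zero => simp
      | succ n => by_cases h : x = y <;> simp [lcp, h, ih]

theorem lcp_comm (a b : List α) : lcp a b = lcp b a :=
  eq_of_forall_le_iff fun _ => by simp only [le_lcp_iff]; tauto

theorem lcp_le_length_left (a b : List α) : lcp a b ≤ a.length := (le_lcp_iff.1 le_rfl).1

theorem lcp_le_length_right (a b : List α) : lcp a b ≤ b.length := (le_lcp_iff.1 le_rfl).2.1

theorem lcp_eq_length_left_iff {a b : List α} : lcp a b = a.length ↔ a <+: b := by
  rw [le_antisymm_iff, and_iff_right (lcp_le_length_left a b), le_lcp_iff, List.take_length,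
    List.prefix_iff_eq_take]
  refine ⟨fun h => h.2.2, fun h => ⟨le_rfl, ?_, h⟩⟩
  rw [h]; exact List.length_take_le' _ _

theorem lcp_self (a : List α) : lcp a a = a.length := lcp_eq_length_left_iff.2 (List.prefix_refl a)

theorem lcp_eq_min_of_prefix {a b c : List α} (h : c <+: b) : lcp a c = min (lcp a b) c.length := by
  refine eq_of_forall_le_iff fun n => ?_
  simp only [le_min_iff, le_lcp_iff]
  constructor
  · rintro ⟨ha, hc, htake⟩
    exact ⟨⟨ha, hc.trans h.length_le, htake.trans (take_eq_take_of_prefix h hc)⟩, hc⟩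
  · rintro ⟨⟨ha, -, htake⟩, hc⟩
    exact ⟨ha, hc, htake.trans (take_eq_take_of_prefix h hc).symm⟩

theorem lcp_append_singleton_of_not_prefix {a w : List α} {x : α} (h : ¬ a ++ [x] <+: w) :
    lcp (a ++ [x]) w = lcp a w := by
  have hle : lcp (a ++ [x]) w ≤ a.length + 1 := by
    simpa using lcp_le_length_left (a ++ [x]) w
  have hne : lcp (a ++ [x]) w ≠ a.length + 1 := fun he =>
    h (lcp_eq_length_left_iff.1 (by simpa using he))
  have hmin := lcp_eq_min_of_prefix (a := w) (List.prefix_append a [x])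
  rw [lcp_comm w, lcp_comm w] at hmin
  omega

def treeDist (a b : List α) : ℕ := a.length + b.length - 2 * lcp a b

theorem treeDist_comm (a b : List α) : treeDist a b = treeDist b a := by
  rw [treeDist, treeDist, lcp_comm, Nat.add_comm a.length]

@[simp] theorem treeDist_self (a : List α) : treeDist a a = 0 := by
  rw [treeDist, lcp_self]; omega

theorem treeDist_append_singleton_of_prefix {a w : List α} {x : α} (h : a ++ [x] <+: w) :
    treeDist (a ++ [x]) w + 1 = treeDist a w := by
  have h1 := lcp_eq_length_left_iff.2 h
  have h2 := lcp_eq_length_left_iff.2 ((List.prefix_append a [x]).trans h)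
  have h3 := h.length_le
  simp only [List.length_append, List.length_singleton] at h1 h3
  simp only [treeDist, List.length_append, List.length_singleton, h1, h2]
  omega

theorem treeDist_append_singleton_of_not_prefix {a w : List α} {x : α} (h : ¬ a ++ [x] <+: w) :
    treeDist (a ++ [x]) w = treeDist a w + 1 := by
  have h1 := lcp_le_length_left a w
  have h2 := lcp_le_length_right a w
  simp only [treeDist, List.length_append, List.length_singleton,
    lcp_append_singleton_of_not_prefix h]
  omega

theorem treeDist_append_singleton_add_one_eq_iff {a w : List α} {x : α} :
    treeDist (a ++ [x]) w + 1 = treeDist a w ↔ a ++ [x] <+: w := by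
  refine ⟨fun h => ?_, treeDist_append_singleton_of_prefix⟩
  by_contra hw
  have := treeDist_append_singleton_of_not_prefix hw
  omega

theorem treeDist_add_one_eq_append_singleton_iff {a w : List α} {x : α} :
    treeDist a w + 1 = treeDist (a ++ [x]) w ↔ ¬ a ++ [x] <+: w := by
  refine ⟨fun h hw => ?_, fun hw => (treeDist_append_singleton_of_not_prefix hw).symm⟩
  have := treeDist_append_singleton_of_prefix hw
  omega

/-- The vertex set of the path between `a` and `b` in the tree of words. -/
def treeSegment (a b : List α) : Set (List α) :=
  {σ | (σ <+: a ∨ σ <+: b) ∧ lcp a b ≤ σ.length}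

theorem mem_treeSegment {a b σ : List α} :
    σ ∈ treeSegment a b ↔ (σ <+: a ∨ σ <+: b) ∧ lcp a b ≤ σ.length := Iff.rfl

theorem treeSegment_comm (a b : List α) : treeSegment a b = treeSegment b a := by
  ext σ; simp only [mem_treeSegment, lcp_comm a b, or_comm]

theorem treeDist_add_treeDist_of_mem_treeSegment {a b σ : List α} (h : σ ∈ treeSegment a b) :
    treeDist a σ + treeDist σ b = treeDist a b := by
  wlog hb : σ <+: b generalizing a b
  · have h' : σ ∈ treeSegment b a := treeSegment_comm a b ▸ h
    have := this h' (h.1.resolve_right hb)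
    rw [treeDist_comm b σ, treeDist_comm σ a, treeDist_comm b a] at this
    omega
  have h1 : lcp a σ = lcp a b := by
    rw [lcp_eq_min_of_prefix hb, min_eq_left h.2]
  have h2 := lcp_eq_length_left_iff.2 hb
  have h3 := lcp_le_length_left a b
  have h4 := hb.length_le
  simp only [treeDist, h1, h2]
  have := h.2
  omega

theorem length_lt_lcp_of_not_mem_treeSegment {a b σ : List α} (hσ : σ <+: a ∨ σ <+: b)
    (h : σ ∉ treeSegment a b) : σ.length < lcp a b := by
  simp only [mem_treeSegment, not_and, not_le] at h
  exact h hσ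

theorem take_succ_prefix_of_not_mem_treeSegment {a b σ : List α} (hσ : σ <+: b)
    (h : σ ∉ treeSegment a b) : b.take (σ.length + 1) <+: a := by
  have := le_lcp_iff.1 (length_lt_lcp_of_not_mem_treeSegment (Or.inr hσ) h)
  rw [← this.2.2]
  exact List.take_prefix _ _

theorem prefix_of_not_mem_treeSegment {a b σ : List α} (hσ : σ <+: a)
    (h : σ ∉ treeSegment a b) : σ <+: b := by
  rw [treeSegment_comm] at h
  refine List.IsPrefix.trans ?_ (take_succ_prefix_of_not_mem_treeSegment hσ h)
  rw [List.prefix_take_iff]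
  exact ⟨hσ, by omega⟩

end Lcp

section PrefixTree

variable {α : Type*}

def prefixTree (α : Type*) : SimpleGraph (List α) :=
  fromRel fun a c => ∃ x, c = a ++ [x]

theorem prefixTree_adj {a c : List α} :
    (prefixTree α).Adj a c ↔ (∃ x, c = a ++ [x]) ∨ ∃ x, a = c ++ [x] := by
  rw [prefixTree, fromRel_adj, and_iff_right_iff_imp]
  rintro (⟨x, rfl⟩ | ⟨x, rfl⟩) <;> simp

variable [DecidableEq α]

theorem treeDist_le_treeDist_add_one_of_adj {a c : List α} (h : (prefixTree α).Adj a c)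
    (w : List α) : treeDist a w ≤ treeDist c w + 1 := by
  rcases prefixTree_adj.1 h with ⟨x, rfl⟩ | ⟨x, rfl⟩
  · by_cases hw : a ++ [x] <+: w
    · have := treeDist_append_singleton_of_prefix hw; omega
    · have := treeDist_append_singleton_of_not_prefix hw; omega
  · by_cases hw : c ++ [x] <+: w
    · have := treeDist_append_singleton_of_prefix hw; omega
    · have := treeDist_append_singleton_of_not_prefix hw; omega

theorem eq_of_adj_of_treeDist_add_one {a c c' w : List α} (h : (prefixTree α).Adj a c)
    (h' : (prefixTree α).Adj a c') (hc : treeDist c w + 1 = treeDist a w)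
    (hc' : treeDist c' w + 1 = treeDist a w) : c = c' := by
  rcases prefixTree_adj.1 h with ⟨x, rfl⟩ | ⟨x, rfl⟩ <;>
    rcases prefixTree_adj.1 h' with ⟨x', rfl⟩ | ⟨x', he⟩
  · have hx := treeDist_append_singleton_add_one_eq_iff.1 hc
    have hx' := treeDist_append_singleton_add_one_eq_iff.1 hc'
    rcases List.prefix_or_prefix_of_prefix hx hx' with hp | hp
    · exact hp.eq_of_length (by simp)
    · exact (hp.eq_of_length (by simp)).symm
  · subst he
    exact absurd ((List.prefix_append _ _).trans (treeDist_append_singleton_add_one_eq_iff.1 hc))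
      (treeDist_add_one_eq_append_singleton_iff.1 hc')
  · exact absurd ((List.prefix_append _ _).trans (treeDist_append_singleton_add_one_eq_iff.1 hc'))
      (treeDist_add_one_eq_append_singleton_iff.1 hc)
  · exact List.append_inj_left' he (by rfl)

theorem exists_adj_treeDist_add_one {a w : List α} (h : a ≠ w) :
    ∃ c, (prefixTree α).Adj a c ∧ treeDist c w + 1 = treeDist a w ∧
      c.length ≤ max a.length w.length := by
  by_cases hp : a <+: w
  · obtain ⟨_ | ⟨x, d⟩, rfl⟩ := hp
    · simp at h
    refine ⟨a ++ [x], prefixTree_adj.2 (Or.inl ⟨x, rfl⟩),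
      treeDist_append_singleton_of_prefix ⟨d, by simp⟩, by simp⟩
  · have ha : a ≠ [] := by rintro rfl; exact hp List.nil_prefix
    have hdl := List.dropLast_append_getLast ha
    refine ⟨a.dropLast, prefixTree_adj.2 (Or.inr ⟨a.getLast ha, hdl.symm⟩), ?_, ?_⟩
    · rw [← treeDist_append_singleton_of_not_prefix (x := a.getLast ha), hdl]
      rwa [hdl]
    · simp

end PrefixTree

section Potential

variable {V : Type*} {G : SimpleGraph V} {f : V → ℕ} {y : V}

theorem potential_le_length (hf : ∀ u v, G.Adj u v → f u ≤ f v + 1) (hy : f y = 0) {x : V}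
    (p : G.Walk x y) : f x ≤ p.length := by
  induction p with
  | nil => simp [hy]
  | @cons u v _ h p ih =>
    have := hf u v h
    rw [Walk.length_cons]
    omega

theorem exists_walk_length_eq_potential (hy : f y = 0) {C : Set V}
    (hstep : ∀ x ∈ C, x ≠ y → ∃ z ∈ C, G.Adj x z ∧ f z + 1 = f x) {x : V} (hx : x ∈ C) :
    ∃ p : G.Walk x y, p.length = f x := by
  induction hn : f x using Nat.strong_induction_on generalizing x with
  | _ n ih =>
    by_cases hxy : x = y
    · subst hxy
      exact ⟨.nil, by simp [hy, ← hn]⟩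
    · obtain ⟨z, hz, hadj, hfz⟩ := hstep x hx hxy
      obtain ⟨q, hq⟩ := ih (f z) (by omega) hz rfl
      exact ⟨.cons hadj q, by simp [hq]; omega⟩

theorem dist_eq_potential (hf : ∀ u v, G.Adj u v → f u ≤ f v + 1) (hy : f y = 0) {C : Set V}
    (hstep : ∀ x ∈ C, x ≠ y → ∃ z ∈ C, G.Adj x z ∧ f z + 1 = f x) {x : V} (hx : x ∈ C) :
    G.dist x y = f x := by
  obtain ⟨p, hp⟩ := exists_walk_length_eq_potential hy hstep hx
  refine le_antisymm (hp ▸ dist_le p) ?_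
  obtain ⟨q, hq⟩ := p.reachable.exists_walk_length_eq_dist
  exact hq ▸ potential_le_length hf hy q

theorem potential_add_one_of_length_eq (hf : ∀ u v, G.Adj u v → f u ≤ f v + 1) (hy : f y = 0)
    {x z : V} (h : G.Adj x z) (p : G.Walk z y) (hp : p.length + 1 = f x) :
    f z + 1 = f x := by
  have := potential_le_length hf hy p
  have := hf x z h
  omega

theorem eq_and_support_subset_of_length_eq_potential (hf : ∀ u v, G.Adj u v → f u ≤ f v + 1)
    (hy : f y = 0) {C : Set V} (hC : ∀ u ∈ C, ∀ v, G.Adj u v → f v + 1 = f u → v ∈ C)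
    (huniq : ∀ u ∈ C, ∀ v w, G.Adj u v → G.Adj u w → f v + 1 = f u → f w + 1 = f u → v = w)
    {x : V} (hx : x ∈ C) (p q : G.Walk x y) (hp : p.length = f x) (hq : q.length = f x) :
    p = q ∧ ∀ v ∈ p.support, v ∈ C := by
  induction p with
  | nil =>
    refine ⟨(Walk.length_eq_zero_iff.1 (hq.trans hy)).eq_nil.symm, ?_⟩
    simpa using hx
  | @cons u v _ h p ih =>
    cases q with
    | nil => simp [hy] at hp
    | @cons _ v' _ h' q =>
      simp only [Walk.length_cons] at hp hq
      have hv := potential_add_one_of_length_eq hf hy h p hp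
      have hv' := potential_add_one_of_length_eq hf hy h' q hq
      obtain rfl := huniq u hx v v' h h' hv hv'
      obtain ⟨rfl, hsupp⟩ := ih hy (hC u hx v h hv) q (by omega) (by omega)
      refine ⟨rfl, fun w hw => ?_⟩
      rcases List.mem_cons.1 (Walk.support_cons h p ▸ hw) with rfl | hw
      · exact hx
      · exact hsupp w hw

end Potential

section Graph

variable {r n t : ℕ}

def word : gluedVert r n t → List (Fin t)
  | .inl (_, s) => s.1
  | .inr l => l.1

@[simp] theorem word_inl (i : Fin n) (s : {l : List (Fin t) // l.length < r}) :
    word (.inl (i, s) : gluedVert r n t) = s.1 := rfl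

@[simp] theorem word_inr (l : {l : List (Fin t) // l.length = r}) :
    word (.inr l : gluedVert r n t) = l.1 := rfl

theorem length_word_le (x : gluedVert r n t) : (word x).length ≤ r := by
  rcases x with ⟨_, s⟩ | l
  · exact s.2.le
  · exact l.2.le

@[simp] theorem gluedTree_adj_inl_inl {i j : Fin n} {s u : {l : List (Fin t) // l.length < r}} :
    (gluedTree r n t).Adj (.inl (i, s)) (.inl (j, u)) ↔
      i = j ∧ (prefixTree (Fin t)).Adj s.1 u.1 := by
  simp only [gluedTree, prefixTree, fromRel_adj, gluedAdj, ne_eq, Sum.inl.injEq,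
    Prod.mk.injEq, Subtype.ext_iff]
  constructor
  · rintro ⟨hne, ⟨rfl, h⟩ | ⟨rfl, h⟩⟩ <;> exact ⟨rfl, fun he => hne ⟨rfl, he⟩, by tauto⟩
  · rintro ⟨rfl, hne, h⟩
    exact ⟨fun he => hne he.2, by tauto⟩

@[simp] theorem gluedTree_adj_inl_inr {i : Fin n} {s : {l : List (Fin t) // l.length < r}}
    {l : {l : List (Fin t) // l.length = r}} :
    (gluedTree r n t).Adj (.inl (i, s)) (.inr l) ↔ ∃ x, l.1 = s.1 ++ [x] := by
  simp [gluedTree, gluedAdj]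

@[simp] theorem gluedTree_adj_inr_inl {i : Fin n} {s : {l : List (Fin t) // l.length < r}}
    {l : {l : List (Fin t) // l.length = r}} :
    (gluedTree r n t).Adj (.inr l) (.inl (i, s)) ↔ ∃ x, l.1 = s.1 ++ [x] := by
  rw [SimpleGraph.adj_comm, gluedTree_adj_inl_inr]

@[simp] theorem not_gluedTree_adj_inr_inr {l m : {l : List (Fin t) // l.length = r}} :
    ¬ (gluedTree r n t).Adj (.inr l) (.inr m) := by
  simp [gluedTree, gluedAdj]

@[simp] theorem inr_mem_quasiLeaves (l : {l : List (Fin t) // l.length = r}) :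
    (.inr l : gluedVert r n t) ∈ quasiLeaves r n t := ⟨l, rfl⟩

@[simp] theorem inl_not_mem_quasiLeaves (x : Fin n × {l : List (Fin t) // l.length < r}) :
    (.inl x : gluedVert r n t) ∉ quasiLeaves r n t := by
  rintro ⟨_, h⟩; cases h

theorem prefixTree_adj_word {x z : gluedVert r n t} (h : (gluedTree r n t).Adj x z) :
    (prefixTree (Fin t)).Adj (word x) (word z) := by
  rcases x with ⟨i, s⟩ | l <;> rcases z with ⟨j, u⟩ | m
  · exact (gluedTree_adj_inl_inl.1 h).2
  · exact prefixTree_adj.2 (Or.inl (gluedTree_adj_inl_inr.1 h))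
  · exact prefixTree_adj.2 (Or.inr (gluedTree_adj_inr_inl.1 h))
  · exact absurd h not_gluedTree_adj_inr_inr

theorem mem_copySet_of_adj {i : Fin n} {s : {l : List (Fin t) // l.length < r}}
    {z : gluedVert r n t} (h : (gluedTree r n t).Adj (.inl (i, s)) z) : z ∈ copySet r n t i := by
  rcases z with ⟨j, u⟩ | m
  · exact Or.inl ⟨u, by rw [(gluedTree_adj_inl_inl.1 h).1]⟩
  · exact Or.inr ⟨m, rfl⟩

theorem word_injOn_copySet (i : Fin n) : Set.InjOn word (copySet r n t i) := by
  rintro x (⟨s, rfl⟩ | ⟨l, rfl⟩) z (⟨u, rfl⟩ | ⟨m, rfl⟩) h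
  · simp [Subtype.ext h]
  · have := s.2; simp only [word_inl, word_inr] at h; rw [h, m.2] at this; omega
  · have := u.2; simp only [word_inl, word_inr] at h; rw [← h, l.2] at this; omega
  · simp [Subtype.ext h]

theorem eq_inr_of_prefix_word {l : {l : List (Fin t) // l.length = r}} {y : gluedVert r n t}
    (h : l.1 <+: word y) : y = .inr l := by
  rcases y with ⟨_, s⟩ | m
  · exact absurd (h.length_le.trans_lt s.2) (by simp [l.2])
  · exact congrArg Sum.inr (Subtype.ext (h.eq_of_length (by simp [l.2, m.2])).symm)

def copyVertex (i : Fin n) (w : List (Fin t)) (hw : w.length ≤ r) : gluedVert r n t :=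
  if h : w.length < r then .inl (i, ⟨w, h⟩) else .inr ⟨w, by omega⟩

theorem copyVertex_mem_copySet (i : Fin n) (w : List (Fin t)) (hw : w.length ≤ r) :
    copyVertex i w hw ∈ copySet r n t i := by
  unfold copyVertex
  split_ifs
  · exact Or.inl ⟨_, rfl⟩
  · exact Or.inr ⟨_, rfl⟩

@[simp] theorem word_copyVertex (i : Fin n) (w : List (Fin t)) (hw : w.length ≤ r) :
    word (copyVertex i w hw) = w := by
  unfold copyVertex; split_ifs <;> rfl

theorem copyVertex_word {i : Fin n} {x : gluedVert r n t} (hx : x ∈ copySet r n t i) :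
    copyVertex i (word x) (length_word_le x) = x :=
  word_injOn_copySet i (copyVertex_mem_copySet _ _ _) hx (word_copyVertex _ _ _)

theorem gluedTree_adj_copyVertex {i : Fin n} {a c : List (Fin t)} (ha : a.length ≤ r)
    (hc : c.length ≤ r) (h : (prefixTree (Fin t)).Adj a c) :
    (gluedTree r n t).Adj (copyVertex i a ha) (copyVertex i c hc) := by
  wlog hac : ∃ x, c = a ++ [x] generalizing a c
  · exact (this hc ha h.symm ((prefixTree_adj.1 h).resolve_left hac)).symm
  obtain ⟨x, rfl⟩ := hac
  have ha' : a.length < r := by simp at hc; omega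
  simp only [copyVertex, ha', dite_true]
  split_ifs
  · simpa using h
  · simp

end Graph

section Geodesic

variable {r n t : ℕ}

theorem treeDist_word_le_of_adj {x z : gluedVert r n t} (h : (gluedTree r n t).Adj x z)
    (y : gluedVert r n t) : treeDist (word x) (word y) ≤ treeDist (word z) (word y) + 1 :=
  treeDist_le_treeDist_add_one_of_adj (prefixTree_adj_word h) _

theorem exists_adj_treeDist_word_add_one {i : Fin n} {x y : gluedVert r n t}
    (hx : x ∈ copySet r n t i) (hy : y ∈ copySet r n t i) (hxy : x ≠ y) :
    ∃ z ∈ copySet r n t i, (gluedTree r n t).Adj x z ∧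
      treeDist (word z) (word y) + 1 = treeDist (word x) (word y) := by
  have hne : word x ≠ word y := fun h => hxy (word_injOn_copySet i hx hy h)
  obtain ⟨c, hadj, hc, hlen⟩ := exists_adj_treeDist_add_one hne
  have hcr : c.length ≤ r := hlen.trans (max_le (length_word_le x) (length_word_le y))
  have hadj' := gluedTree_adj_copyVertex (i := i) (length_word_le x) hcr hadj
  rw [copyVertex_word hx] at hadj'
  exact ⟨copyVertex i c hcr, copyVertex_mem_copySet _ _ _, hadj', by simpa using hc⟩

theorem exists_walk_length_eq_treeDist {i : Fin n} {x y : gluedVert r n t}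
    (hx : x ∈ copySet r n t i) (hy : y ∈ copySet r n t i) :
    ∃ p : (gluedTree r n t).Walk x y, p.length = treeDist (word x) (word y) :=
  exists_walk_length_eq_potential (f := fun z => treeDist (word z) (word y)) (treeDist_self _)
    (fun _ hx hxy => exists_adj_treeDist_word_add_one hx hy hxy) hx

theorem dist_eq_treeDist {i : Fin n} {x y : gluedVert r n t} (hx : x ∈ copySet r n t i)
    (hy : y ∈ copySet r n t i) : (gluedTree r n t).dist x y = treeDist (word x) (word y) :=
  dist_eq_potential (f := fun z => treeDist (word z) (word y))
    (fun _ _ h => treeDist_word_le_of_adj h y) (treeDist_self _)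
    (fun _ hx hxy => exists_adj_treeDist_word_add_one hx hy hxy) hx

theorem eq_and_support_of_length_eq_treeDist {i : Fin n} {s : {l : List (Fin t) // l.length < r}}
    {y : gluedVert r n t} (p q : (gluedTree r n t).Walk (.inl (i, s)) y)
    (hp : p.length = treeDist s.1 (word y)) (hq : q.length = treeDist s.1 (word y)) :
    p = q ∧ ∀ v ∈ p.support, (∃ u, v = .inl (i, u)) ∨ v = y := by
  refine eq_and_support_subset_of_length_eq_potential (f := fun z => treeDist (word z) (word y))
    (C := {v | (∃ u, v = .inl (i, u)) ∨ v = y}) (fun _ _ h => treeDist_word_le_of_adj h y)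
    (treeDist_self _) ?_ ?_ (Or.inl ⟨s, rfl⟩) p q hp hq
  · rintro u (⟨s', rfl⟩ | rfl) v hadj hv
    · rcases mem_copySet_of_adj hadj with ⟨u', rfl⟩ | ⟨m, rfl⟩
      · exact Or.inl ⟨u', rfl⟩
      · obtain ⟨x, hx⟩ := gluedTree_adj_inl_inr.1 hadj
        simp only [word_inr, word_inl, hx, treeDist_append_singleton_add_one_eq_iff] at hv
        exact Or.inr (eq_inr_of_prefix_word (hx ▸ hv)).symm
    · simp at hv
  · rintro u (⟨s', rfl⟩ | rfl) v w hv hw hfv hfw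
    · exact word_injOn_copySet i (mem_copySet_of_adj hv) (mem_copySet_of_adj hw)
        (eq_of_adj_of_treeDist_add_one (prefixTree_adj_word hv) (prefixTree_adj_word hw) hfv hfw)
    · simp at hfv

theorem mem_support_of_treeDist_add_treeDist {i : Fin n} {s : {l : List (Fin t) // l.length < r}}
    {y w : gluedVert r n t} (hy : y ∈ copySet r n t i) (hw : w ∈ copySet r n t i)
    (p : (gluedTree r n t).Walk (.inl (i, s)) y) (hp : p.length = treeDist s.1 (word y))
    (h : treeDist s.1 (word w) + treeDist (word w) (word y) = treeDist s.1 (word y)) :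
    w ∈ p.support := by
  obtain ⟨q₁, hq₁⟩ := exists_walk_length_eq_treeDist (Or.inl ⟨s, rfl⟩) hw
  obtain ⟨q₂, hq₂⟩ := exists_walk_length_eq_treeDist hw hy
  rw [(eq_and_support_of_length_eq_treeDist p (q₁.append q₂) hp
    (by simp only [Walk.length_append, hq₁, hq₂, word_inl, h])).1]
  exact (Walk.mem_support_append_iff q₁ q₂).2 (Or.inl q₁.end_mem_support)

theorem val_not_prefix_of_ne {l l' : {l : List (Fin t) // l.length = r}} (h : l ≠ l') :
    ¬ l.1 <+: l'.1 := fun hp => h (Subtype.ext (hp.eq_of_length (by rw [l.2, l'.2])))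

theorem dist_inr_inr_eq_of_adj {l l' : {l : List (Fin t) // l.length = r}} (hll' : l ≠ l')
    {j : Fin n} {u : {l : List (Fin t) // l.length < r}}
    (h : (gluedTree r n t).Adj (.inr l) (.inl (j, u))) :
    (gluedTree r n t).dist (.inr l) (.inr l') = treeDist u.1 l'.1 + 1 := by
  obtain ⟨x, hx⟩ := gluedTree_adj_inr_inl.1 h
  rw [dist_eq_treeDist (i := j) (Or.inr ⟨l, rfl⟩) (Or.inr ⟨l', rfl⟩), word_inr, word_inr, hx,
    treeDist_append_singleton_of_not_prefix (hx ▸ val_not_prefix_of_ne hll')]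

theorem exists_forall_mem_support_of_length_eq_dist {l l' : {l : List (Fin t) // l.length = r}}
    (hll' : l ≠ l') (p : (gluedTree r n t).Walk (.inr l) (.inr l'))
    (hp : p.length = (gluedTree r n t).dist (.inr l) (.inr l')) :
    ∃ j, ∀ σ : {l : List (Fin t) // l.length < r}, σ.1 ∈ treeSegment l.1 l'.1 →
      .inl (j, σ) ∈ p.support := by
  cases p with
  | nil => exact absurd rfl hll'
  | @cons _ z _ h p =>
    rcases z with ⟨j, u⟩ | m
    swap
    · exact absurd h not_gluedTree_adj_inr_inr
    rw [dist_inr_inr_eq_of_adj hll' h, Walk.length_cons, Nat.add_right_cancel_iff] at hp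
    obtain ⟨x, hx⟩ := gluedTree_adj_inr_inl.1 h
    refine ⟨j, fun σ hσ => List.mem_cons_of_mem _ ?_⟩
    refine mem_support_of_treeDist_add_treeDist (Or.inr ⟨l', rfl⟩) (Or.inl ⟨σ, rfl⟩) p hp
      (treeDist_add_treeDist_of_mem_treeSegment ⟨?_, ?_⟩)
    · refine hσ.1.imp_left fun hσl => ?_
      rw [hx, List.prefix_concat_iff] at hσl
      refine hσl.resolve_left fun he => ?_
      have := congrArg List.length (hx.trans he.symm)
      simp only [l.2] at this
      exact σ.2.ne this.symm
    · have hmin := lcp_eq_min_of_prefix (a := l'.1) (hx ▸ List.prefix_append u.1 [x])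
      rw [lcp_comm l'.1, lcp_comm l'.1] at hmin
      simp only [word_inl, word_inr]
      have := hσ.2
      omega

theorem exists_walk_inr_inr_of_adj {l l' : {l : List (Fin t) // l.length = r}} (hll' : l ≠ l')
    {j : Fin n} {u : {l : List (Fin t) // l.length < r}}
    (h : (gluedTree r n t).Adj (.inr l) (.inl (j, u))) :
    ∃ p : (gluedTree r n t).Walk (.inr l) (.inr l'),
      p.length = (gluedTree r n t).dist (.inr l) (.inr l') ∧
      ∀ v ∈ p.support, v = .inr l ∨ (∃ u, v = .inl (j, u)) ∨ v = .inr l' := by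
  obtain ⟨q, hq⟩ := exists_walk_length_eq_treeDist (Or.inl ⟨u, rfl⟩ : _ ∈ copySet r n t j)
    (Or.inr ⟨l', rfl⟩ : (.inr l' : gluedVert r n t) ∈ copySet r n t j)
  refine ⟨.cons h q, by rw [dist_inr_inr_eq_of_adj hll' h, Walk.length_cons, hq]; rfl,
    fun v hv => ?_⟩
  rcases List.mem_cons.1 hv with rfl | hv
  · exact Or.inl rfl
  · exact Or.inr ((eq_and_support_of_length_eq_treeDist q q hq hq).2 v hv)

end Geodesic

section Visibility

theorem isVisible_refl {V : Type*} {G : SimpleGraph V} {S : Set V} (u : V) :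
    isVisible G S u u :=
  ⟨.nil, .nil, by simp, by simp⟩

theorem isVisible_symm {V : Type*} {G : SimpleGraph V} {S : Set V} {u v : V}
    (h : isVisible G S u v) : isVisible G S v u := by
  obtain ⟨p, hpath, hlen, hS⟩ := h
  refine ⟨p.reverse, hpath.reverse, by rw [Walk.length_reverse, hlen, dist_comm],
    fun w hw hwS => (hS w (by simpa using hw) hwS).symm⟩

theorem not_isVisible_of_forall {V : Type*} {G : SimpleGraph V} {S : Set V} {u v : V}
    (h : ∀ p : G.Walk u v, p.length = G.dist u v → ∃ w ∈ p.support, w ∈ S ∧ w ≠ u ∧ w ≠ v) :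
    ¬ isVisible G S u v := by
  rintro ⟨p, -, hp, hS⟩
  obtain ⟨w, hw, hwS, hwu, hwv⟩ := h p hp
  rcases hS w hw hwS with h | h <;> contradiction

variable {r n t : ℕ} {S : Set (gluedVert r n t)}

theorem not_mem_treeSegment_of_isVisible {i : Fin n} {s σ : {l : List (Fin t) // l.length < r}}
    {y : gluedVert r n t} (hvis : isVisible (gluedTree r n t) S (.inl (i, s)) y)
    (hy : y ∈ copySet r n t i) (hσ : .inl (i, σ) ∈ S) (hσs : σ ≠ s) (hσy : .inl (i, σ) ≠ y) :
    σ.1 ∉ treeSegment s.1 (word y) := by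
  refine fun hseg => not_isVisible_of_forall (fun p hp => ⟨_, ?_, hσ, by simpa using hσs, hσy⟩) hvis
  rw [dist_eq_treeDist (Or.inl ⟨s, rfl⟩) hy] at hp
  exact mem_support_of_treeDist_add_treeDist hy (Or.inl ⟨σ, rfl⟩) p hp
    (treeDist_add_treeDist_of_mem_treeSegment hseg)

theorem not_isVisible_inr_inr {l l' : {l : List (Fin t) // l.length = r}} (hll' : l ≠ l')
    (h : ∀ j, ∃ σ, .inl (j, σ) ∈ S ∧ σ.1 ∈ treeSegment l.1 l'.1) :
    ¬ isVisible (gluedTree r n t) S (.inr l) (.inr l') :=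
  not_isVisible_of_forall fun p hp => by
    obtain ⟨j, hj⟩ := exists_forall_mem_support_of_length_eq_dist hll' p hp
    obtain ⟨σ, hσS, hσ⟩ := h j
    exact ⟨_, hj σ hσ, hσS, by simp, by simp⟩

theorem isVisible_quasiLeaves_union_inl_inr (i : Fin n) (s : {l : List (Fin t) // l.length < r})
    (l : {l : List (Fin t) // l.length = r}) :
    isVisible (gluedTree r n t) (quasiLeaves r n t ∪ {.inl (i, s)}) (.inl (i, s)) (.inr l) := by
  have hl : (.inr l : gluedVert r n t) ∈ copySet r n t i := Or.inr ⟨l, rfl⟩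
  obtain ⟨p, hp⟩ := exists_walk_length_eq_treeDist (Or.inl ⟨s, rfl⟩) hl
  have hdist := (dist_eq_treeDist (Or.inl ⟨s, rfl⟩) hl).symm
  refine ⟨p, p.isPath_of_length_eq_dist (hp.trans hdist), hp.trans hdist, fun w hw hwS => ?_⟩
  rcases (eq_and_support_of_length_eq_treeDist p p hp hp).2 w hw with ⟨u, rfl⟩ | rfl
  · exact Or.inl (hwS.resolve_left (inl_not_mem_quasiLeaves _))
  · exact Or.inr rfl

theorem isVisible_quasiLeaves_union_inr_inr {i j : Fin n} (hij : i ≠ j)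
    (s : {l : List (Fin t) // l.length < r}) {l l' : {l : List (Fin t) // l.length = r}}
    (hll' : l ≠ l') :
    isVisible (gluedTree r n t) (quasiLeaves r n t ∪ {.inl (i, s)}) (.inr l) (.inr l') := by
  have hl : l.1 ≠ [] := fun h => hll' (Subtype.ext (by
    rw [h, eq_comm, ← List.length_eq_zero_iff, l'.2, ← l.2, h, List.length_nil]))
  have hu : l.1.dropLast.length < r := by
    rw [List.length_dropLast, l.2]
    have := List.length_pos_iff.2 hl
    omega
  obtain ⟨p, hp, hsupp⟩ := exists_walk_inr_inr_of_adj hll'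
    (gluedTree_adj_inr_inl.2 ⟨_, (List.dropLast_append_getLast hl).symm⟩ :
      (gluedTree r n t).Adj (.inr l) (.inl (j, ⟨_, hu⟩)))
  refine ⟨p, p.isPath_of_length_eq_dist hp, hp, fun w hw hwS => ?_⟩
  rcases hsupp w hw with h | ⟨u, rfl⟩ | h
  · exact Or.inl h
  · have := hwS.resolve_left (inl_not_mem_quasiLeaves _)
    simp only [Set.mem_singleton_iff, Sum.inl.injEq, Prod.mk.injEq] at this
    exact absurd this.1 hij.symm
  · exact Or.inr h

theorem isMVSet_quasiLeaves_union (hn : 2 ≤ n) (x : Fin n × {l : List (Fin t) // l.length < r}) :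
    isMVSet (gluedTree r n t) (quasiLeaves r n t ∪ {.inl x}) := by
  obtain ⟨i, s⟩ := x
  have : Nontrivial (Fin n) := Fin.nontrivial_iff_two_le.2 hn
  obtain ⟨j, hj⟩ := exists_ne i
  rintro u (⟨l, rfl⟩ | rfl) v (⟨l', rfl⟩ | rfl)
  · by_cases hll' : l = l'
    · subst hll'; exact isVisible_refl _
    · exact isVisible_quasiLeaves_union_inr_inr hj.symm s hll'
  · exact isVisible_symm (isVisible_quasiLeaves_union_inl_inr i s l)
  · exact isVisible_quasiLeaves_union_inl_inr i s l'
  · exact isVisible_refl _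

end Visibility

section Counting

instance {α : Type*} [Fintype α] (k : ℕ) : Fintype {l : List α // l.length = k} :=
  inferInstanceAs (Fintype (List.Vector α k))

variable {r t : ℕ}

theorem card_length_eq (k : ℕ) : Fintype.card {l : List (Fin t) // l.length = k} = t ^ k :=
  (card_vector k).trans (by rw [Fintype.card_fin])

def leavesBelow (r : ℕ) (y : List (Fin t)) : Finset (List (Fin t)) :=
  ((Finset.univ : Finset {l : List (Fin t) // l.length = r}).filter fun l => y <+: l.1).map
    (Function.Embedding.subtype _)

theorem mem_leavesBelow {y w : List (Fin t)} : w ∈ leavesBelow r y ↔ w.length = r ∧ y <+: w := by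
  simp [leavesBelow, and_comm]

theorem card_leavesBelow {y : List (Fin t)} (hy : y.length ≤ r) :
    (leavesBelow r y).card = t ^ (r - y.length) := by
  have : leavesBelow r y =
      (Finset.univ : Finset {m : List (Fin t) // m.length = r - y.length}).image
        fun m => y ++ m.1 := by
    ext w
    simp only [mem_leavesBelow, Finset.mem_image, Finset.mem_univ, true_and, Subtype.exists]
    constructor
    · rintro ⟨hw, m, rfl⟩
      exact ⟨m, by rw [List.length_append] at hw; omega, rfl⟩
    · rintro ⟨m, hm, rfl⟩
      exact ⟨by rw [List.length_append]; omega, m, rfl⟩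
  rw [this, Finset.card_image_of_injective _ fun _ _ h => Subtype.ext (List.append_cancel_left h),
    Finset.card_univ, card_length_eq]

/-- Each member of `A` has at least `t` leaves below it; these are disjoint from each other and
from `L`. -/
theorem card_add_mul_card_le {y : List (Fin t)} (hy : y.length ≤ r)
    {L A : Finset (List (Fin t))} (hL : ∀ l ∈ L, l.length = r ∧ y <+: l)
    (hA : ∀ a ∈ A, a.length < r ∧ y <+: a) (hanti : ∀ a ∈ A, ∀ b ∈ A, a <+: b → a = b)
    (hdisj : ∀ a ∈ A, ∀ l ∈ L, ¬ a <+: l) :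
    L.card + t * A.card ≤ t ^ (r - y.length) := by
  have hpd : (A : Set (List (Fin t))).PairwiseDisjoint (leavesBelow r) := by
    intro a ha b hb hab
    refine Finset.disjoint_left.2 fun l hla hlb => hab ?_
    rcases List.prefix_or_prefix_of_prefix (mem_leavesBelow.1 hla).2 (mem_leavesBelow.1 hlb).2
      with h | h
    · exact hanti a ha b hb h
    · exact (hanti b hb a ha h).symm
  have hLA : Disjoint L (A.biUnion (leavesBelow r)) := by
    refine Finset.disjoint_left.2 fun l hl hlA => ?_
    obtain ⟨a, ha, hla⟩ := Finset.mem_biUnion.1 hlA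
    exact hdisj a ha l hl (mem_leavesBelow.1 hla).2
  have hsub : L ∪ A.biUnion (leavesBelow r) ⊆ leavesBelow r y := by
    refine Finset.union_subset (fun l hl => mem_leavesBelow.2 (hL l hl)) fun l hl => ?_
    obtain ⟨a, ha, hla⟩ := Finset.mem_biUnion.1 hl
    obtain ⟨hl, hal⟩ := mem_leavesBelow.1 hla
    exact mem_leavesBelow.2 ⟨hl, (hA a ha).2.trans hal⟩
  calc L.card + t * A.card = L.card + ∑ _a ∈ A, t := by rw [Finset.sum_const, smul_eq_mul, mul_comm]
    _ ≤ L.card + ∑ a ∈ A, (leavesBelow r a).card := by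
        gcongr with a ha
        rw [card_leavesBelow (hA a ha).1.le]
        exact Nat.le_self_pow (by have := (hA a ha).1; omega) t
    _ = (L ∪ A.biUnion (leavesBelow r)).card := by
        rw [Finset.card_union_of_disjoint hLA, Finset.card_biUnion hpd]
    _ ≤ (leavesBelow r y).card := Finset.card_le_card hsub
    _ = t ^ (r - y.length) := card_leavesBelow hy

end Counting

section Unblocked

def Unblocked {α : Type*} [DecidableEq α] (P T : Finset (List α)) : Prop :=
  ∀ s ∈ P, ∀ τ ∈ T, ∀ σ ∈ P, σ ≠ s → σ ≠ τ → σ ∉ treeSegment s τ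

variable {r t : ℕ}

theorem Unblocked.take_succ_prefix {P T : Finset (List (Fin t))} (h : Unblocked P T)
    {p τ q : List (Fin t)} (hp : p ∈ P) (hτ : τ ∈ T) (hpτ : p <+: τ) (hne : p ≠ τ) (hq : q ∈ P)
    (hqp : q ≠ p) : τ.take (p.length + 1) <+: q :=
  take_succ_prefix_of_not_mem_treeSegment hpτ (h q hq τ hτ p hp (Ne.symm hqp) hne)

theorem Unblocked.eq_of_prefix {P T : Finset (List (Fin t))} (h : Unblocked P T) (hT : T.Nonempty)
    {p q : List (Fin t)} (hq : q ∈ P) (hqT : ∀ τ ∈ T, ¬ q <+: τ) (hp : p ∈ P) (hqp : q <+: p) :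
    q = p := by
  by_contra hne
  obtain ⟨τ, hτ⟩ := hT
  exact hqT τ hτ (prefix_of_not_mem_treeSegment hqp
    (h p hp τ hτ q hq hne fun he => hqT τ hτ (he ▸ List.prefix_refl q)))

theorem two_mul_pow_pred_le (ht : 2 ≤ t) (hr : 1 ≤ r) : 2 * t ^ (r - 1) ≤ t ^ r := by
  rw [← Nat.sub_add_cancel hr, pow_succ, Nat.add_sub_cancel, mul_comm]
  exact Nat.mul_le_mul_left _ ht

theorem card_le_of_unblocked_self (ht : 2 ≤ t) {P : Finset (List (Fin t))}
    (hP : ∀ p ∈ P, p.length < r) (hB : Unblocked P P) : P.card ≤ t ^ (r - 1) := by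
  have hpow : t ^ r ≤ t * t ^ (r - 1) := by
    rw [← pow_succ']; exact Nat.pow_le_pow_right (by omega) (by omega)
  by_cases h : ∃ s ∈ P, ∃ p ∈ P, s <+: p ∧ s ≠ p
  · obtain ⟨s, hs, p, hp, hsp, hne⟩ := h
    have hsp' := length_lt_of_prefix_of_ne hsp hne
    -- `s` is not on the path from another member to `p`, so that member lies below the child `c`
    -- of `s` towards `p`
    set c := p.take (s.length + 1)
    have hc : c.length = s.length + 1 := by simp [c, hsp']
    have hcP : ∀ q ∈ P.erase s, c <+: q := fun q hq =>
      hB.take_succ_prefix hs hp hsp hne (Finset.mem_of_mem_erase hq) (Finset.ne_of_mem_erase hq)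
    have hanti : ∀ a ∈ P.erase s, ∀ b ∈ P.erase s, a <+: b → a = b := by
      intro a ha b hb hab
      by_contra hab'
      have h1 := (hB.take_succ_prefix (Finset.mem_of_mem_erase ha) (Finset.mem_of_mem_erase hb)
        hab hab' hs (Finset.ne_of_mem_erase ha).symm).length_le
      have h2 := (hcP a ha).length_le
      have h3 := length_lt_of_prefix_of_ne hab hab'
      simp only [List.length_take] at h1
      omega
    have hcard := card_add_mul_card_le (L := ∅) (y := c) (by have := hP p hp; omega) (by simp)
      (fun a ha => ⟨hP a (Finset.mem_of_mem_erase ha), hcP a ha⟩) hanti (by simp)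
    have hpow' : t ^ (r - c.length) ≤ t ^ (r - 1) := Nat.pow_le_pow_right (by omega) (by omega)
    rw [← Finset.card_erase_add_one hs]
    rcases Nat.eq_zero_or_pos (P.erase s).card with h0 | h0
    · rw [h0]; exact Nat.one_le_pow _ _ (by omega)
    · simp only [Finset.card_empty, zero_add] at hcard
      nlinarith
  · push Not at h
    have hcard := card_add_mul_card_le (L := ∅) (A := P) (y := []) (by simp) (by simp)
      (fun a ha => ⟨hP a ha, List.nil_prefix⟩) (fun a ha b hb hab => h a ha b hb hab) (by simp)
    simp only [Finset.card_empty, zero_add, List.length_nil, Nat.sub_zero] at hcard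
    exact Nat.le_of_mul_le_mul_left (hcard.trans hpow) (by omega)

theorem card_add_card_le_of_prefix (ht : 2 ≤ t) {P L : Finset (List (Fin t))}
    (hP : ∀ p ∈ P, p.length < r) (hL : ∀ l ∈ L, l.length = r) (hA : Unblocked P L)
    {p l₀ q₀ : List (Fin t)} (hp : p ∈ P) (hl₀ : l₀ ∈ L) (hpl₀ : p <+: l₀) (hq₀ : q₀ ∈ P)
    (hq₀p : q₀ ≠ p) : L.card + P.card ≤ t ^ (r - 1) := by
  have hne : ∀ {a l}, a ∈ P → l ∈ L → a ≠ l := fun ha hl he => (hP _ ha).ne (he ▸ hL _ hl)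
  have hpr := hP p hp
  -- `p` is not on the path from another member to `l₀`, so every other member lies below the
  -- child `c` of `p` towards `l₀`, and then so does every leaf of `L`
  set c := l₀.take (p.length + 1)
  have hc : c.length = p.length + 1 := by simp [c, hL l₀ hl₀]; omega
  have hpc : p <+: c := List.prefix_take_iff.2 ⟨hpl₀, by omega⟩
  have hcP : ∀ q ∈ P.erase p, c <+: q := fun q hq => hA.take_succ_prefix hp hl₀ hpl₀
    (hne hp hl₀) (Finset.mem_of_mem_erase hq) (Finset.ne_of_mem_erase hq)
  have hcL : ∀ l ∈ L, l.length = r ∧ c <+: l := by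
    intro l hl
    have hcq := hcP q₀ (Finset.mem_erase.2 ⟨hq₀p, hq₀⟩)
    have := take_succ_prefix_of_not_mem_treeSegment (hpc.trans hcq)
      (treeSegment_comm q₀ l ▸ hA q₀ hq₀ l hl p hp hq₀p.symm (hne hp hl))
    rw [← hc, ← List.prefix_iff_eq_take.1 hcq] at this
    exact ⟨hL l hl, this⟩
  have hleaf : ∀ q ∈ P.erase p, ∀ l ∈ L, ¬ q <+: l := by
    intro q hq l hl hql
    have h1 := (hA.take_succ_prefix (Finset.mem_of_mem_erase hq) hl hql
      (hne (Finset.mem_of_mem_erase hq) hl) hp (Finset.ne_of_mem_erase hq).symm).length_le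
    have h2 := (hcP q hq).length_le
    have h3 := hP q (Finset.mem_of_mem_erase hq)
    simp only [List.length_take, hL l hl] at h1
    omega
  have hcard := card_add_mul_card_le (y := c) (by omega) hcL
    (fun a ha => ⟨hP a (Finset.mem_of_mem_erase ha), hcP a ha⟩)
    (fun a ha b hb => hA.eq_of_prefix ⟨l₀, hl₀⟩ (Finset.mem_of_mem_erase ha) (hleaf a ha)
      (Finset.mem_of_mem_erase hb)) hleaf
  have hpow : t ^ (r - c.length) ≤ t ^ (r - 1) := Nat.pow_le_pow_right (by omega) (by omega)
  have hq : 1 ≤ (P.erase p).card := Finset.card_pos.2 ⟨q₀, Finset.mem_erase.2 ⟨hq₀p, hq₀⟩⟩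
  have := Finset.card_erase_add_one hp
  have : (P.erase p).card + 1 ≤ t * (P.erase p).card := by nlinarith
  omega

theorem eq_singleton_or_card_le_of_unblocked (ht : 2 ≤ t) {P L : Finset (List (Fin t))}
    (hP : ∀ p ∈ P, p.length < r) (hL : ∀ l ∈ L, l.length = r) (hL₀ : L.Nonempty)
    (hA : Unblocked P L) :
    (∃ p, P = {p} ∧ ∃ l ∈ L, p <+: l) ∨ L.card + P.card + min P.card (t ^ (r - 1)) ≤ t ^ r := by
  by_cases h : ∃ p ∈ P, ∃ l ∈ L, p <+: l
  · obtain ⟨p, hp, l₀, hl₀, hpl₀⟩ := h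
    by_cases hPp : P = {p}
    · exact Or.inl ⟨p, hPp, l₀, hl₀, hpl₀⟩
    obtain ⟨q₀, hq₀⟩ : (P.erase p).Nonempty := by
      rw [Finset.nonempty_iff_ne_empty, Ne, Finset.erase_eq_empty_iff]
      exact fun h => h.elim (fun h => Finset.ne_empty_of_mem hp h) hPp
    have := card_add_card_le_of_prefix ht hP hL hA hp hl₀ hpl₀ (Finset.mem_of_mem_erase hq₀)
      (Finset.ne_of_mem_erase hq₀)
    have := two_mul_pow_pred_le (r := r) ht (by have := hP p hp; omega)
    right
    omega
  · push Not at h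
    have hcard := card_add_mul_card_le (y := []) (by simp) (fun l hl => ⟨hL l hl, List.nil_prefix⟩)
      (fun a ha => ⟨hP a ha, List.nil_prefix⟩)
      (fun a ha b hb => hA.eq_of_prefix hL₀ ha (h a ha) hb) h
    right
    have : 2 * P.card ≤ t * P.card := Nat.mul_le_mul_right _ ht
    simp only [List.length_nil, Nat.sub_zero] at hcard
    omega

/-- All of `L` lies below one child of the shorter of `p` and `q`. -/
theorem card_add_two_le_of_not_mem_treeSegment (hr : 2 ≤ r) (ht : 2 ≤ t)
    {L : Finset (List (Fin t))} (hL : ∀ l ∈ L, l.length = r) {p q : List (Fin t)}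
    (hpL : ∃ l ∈ L, p <+: l) (hqL : ∃ l ∈ L, q <+: l)
    (hX : ∀ l ∈ L, ∀ l' ∈ L, l ≠ l' → ¬ (p ∈ treeSegment l l' ∧ q ∈ treeSegment l l')) :
    L.card + 2 ≤ t ^ r := by
  obtain ⟨l₀, hl₀, hpl₀, hql₀⟩ : ∃ l ∈ L, p <+: l ∧ q <+: l := by
    obtain ⟨lp, hlp, hp⟩ := hpL
    obtain ⟨lq, hlq, hq⟩ := hqL
    by_cases hpq : lp = lq
    · subst hpq; exact ⟨lp, hlp, hp, hq⟩
    by_cases hps : p ∈ treeSegment lp lq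
    · refine ⟨lp, hlp, hp, List.IsPrefix.trans ?_ (take_succ_prefix_of_not_mem_treeSegment hq
        fun hqs => hX lp hlp lq hlq hpq ⟨hps, hqs⟩)⟩
      exact List.prefix_take_iff.2 ⟨hq, by omega⟩
    · exact ⟨lq, hlq, prefix_of_not_mem_treeSegment hp hps, hq⟩
  set c := l₀.take (min p.length q.length + 1)
  have hcL : ∀ l ∈ L, l.length = r ∧ c <+: l := by
    refine fun l hl => ⟨hL l hl, ?_⟩
    by_cases h : l₀ = l
    · subst h; exact List.take_prefix _ _
    have key : ∀ σ, σ <+: l₀ → σ ∉ treeSegment l₀ l → min p.length q.length ≤ σ.length →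
        c <+: l := fun σ hσ hσs hmin =>
      (List.take_prefix_take_left (by omega)).trans
        (take_succ_prefix_of_not_mem_treeSegment hσ (treeSegment_comm l₀ l ▸ hσs))
    by_cases hps : p ∈ treeSegment l₀ l
    · exact key q hql₀ (fun hqs => hX l₀ hl₀ l hl h ⟨hps, hqs⟩) (min_le_right _ _)
    · exact key p hpl₀ hps (min_le_left _ _)
  have hc : 1 ≤ c.length ∧ c.length ≤ r := by simp [c, hL l₀ hl₀]; omega
  have hcard := card_add_mul_card_le (A := ∅) (y := c) hc.2 hcL (by simp) (by simp) (by simp)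
  have hpow : t ^ (r - c.length) ≤ t ^ (r - 1) := Nat.pow_le_pow_right (by omega) (by omega)
  have hpow' : t ≤ t ^ (r - 1) := Nat.le_self_pow (by omega) t
  have := two_mul_pow_pred_le ht (by omega : 1 ≤ r)
  simp only [Finset.card_empty, mul_zero, add_zero] at hcard
  omega

theorem card_add_card_add_card_le (hr : 2 ≤ r) (ht : 2 ≤ t) {P Q L : Finset (List (Fin t))}
    (hP : ∀ p ∈ P, p.length < r) (hQ : ∀ q ∈ Q, q.length < r) (hL : ∀ l ∈ L, l.length = r)
    (hPP : Unblocked P P) (hQQ : Unblocked Q Q) (hPL : Unblocked P L) (hQL : Unblocked Q L)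
    (hX : ∀ l ∈ L, ∀ l' ∈ L, l ≠ l' → ∀ p ∈ P, ∀ q ∈ Q,
      ¬ (p ∈ treeSegment l l' ∧ q ∈ treeSegment l l'))
    (h2 : 2 ≤ P.card + Q.card) : P.card + Q.card + L.card ≤ t ^ r := by
  have hPb := card_le_of_unblocked_self ht hP hPP
  have hQb := card_le_of_unblocked_self ht hQ hQQ
  have hpow := two_mul_pow_pred_le ht (by omega : 1 ≤ r)
  have hpow' : 1 ≤ t ^ (r - 1) := Nat.one_le_pow _ _ (by omega)
  rcases L.eq_empty_or_nonempty with rfl | hL₀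
  · simp only [Finset.card_empty]; omega
  rcases eq_singleton_or_card_le_of_unblocked ht hP hL hL₀ hPL with ⟨p, rfl, hpL⟩ | hPc <;>
    rcases eq_singleton_or_card_le_of_unblocked ht hQ hL hL₀ hQL with ⟨q, rfl, hqL⟩ | hQc
  · have := card_add_two_le_of_not_mem_treeSegment hr ht hL hpL hqL
      fun l hl l' hl' hll' => hX l hl l' hl' hll' p (by simp) q (by simp)
    simp only [Finset.card_singleton]; omega
  · simp only [Finset.card_singleton] at h2 hQc ⊢; omega
  · simp only [Finset.card_singleton] at h2 hPc ⊢; omega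
  · omega

end Unblocked

section Words

noncomputable instance {α : Type*} [Finite α] (k : ℕ) : Fintype {l : List α // l.length < k} :=
  (List.finite_length_lt α k).fintype

variable {r n t : ℕ} {S : Set (gluedVert r n t)}

open Classical in
noncomputable def internalWords (S : Set (gluedVert r n t)) (i : Fin n) : Finset (List (Fin t)) :=
  (Finset.univ.filter fun s => .inl (i, s) ∈ S).map (Function.Embedding.subtype _)

open Classical in
noncomputable def leafWords (S : Set (gluedVert r n t)) : Finset (List (Fin t)) :=
  (Finset.univ.filter fun l => .inr l ∈ S).map (Function.Embedding.subtype _)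

theorem mem_internalWords {i : Fin n} {w : List (Fin t)} :
    w ∈ internalWords S i ↔ ∃ h : w.length < r, .inl (i, ⟨w, h⟩) ∈ S := by
  simp [internalWords]

theorem mem_leafWords {w : List (Fin t)} :
    w ∈ leafWords S ↔ ∃ h : w.length = r, .inr ⟨w, h⟩ ∈ S := by
  simp [leafWords]

theorem ncard_inter_quasiLeaves : (S ∩ quasiLeaves r n t).ncard = (leafWords S).card := by
  classical
  have : S ∩ quasiLeaves r n t =
      ↑((Finset.univ.filter fun l => .inr l ∈ S).map
        (Function.Embedding.inr : _ ↪ gluedVert r n t)) := by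
    ext x
    rcases x with _ | l <;> simp
  rw [this, Set.ncard_coe_finset, Finset.card_map, leafWords, Finset.card_map]

theorem ncard_diff_quasiLeaves :
    (S \ quasiLeaves r n t).ncard = ∑ i, (internalWords S i).card := by
  classical
  have : S \ quasiLeaves r n t =
      ↑((Finset.univ.filter fun x => .inl x ∈ S).map
        (Function.Embedding.inl : _ ↪ gluedVert r n t)) := by
    ext x
    rcases x with _ | l <;> simp
  simp only [this, Set.ncard_coe_finset, Finset.card_map, internalWords, Finset.card_filter,
    Fintype.sum_prod_type]

theorem unblocked_internalWords (hS : isMVSet (gluedTree r n t) S) (i : Fin n) :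
    Unblocked (internalWords S i) (internalWords S i) := by
  intro s hs s' hs' σ hσ hσs hσs'
  obtain ⟨hs, hsS⟩ := mem_internalWords.1 hs
  obtain ⟨hs', hsS'⟩ := mem_internalWords.1 hs'
  obtain ⟨hσ, hσS⟩ := mem_internalWords.1 hσ
  exact not_mem_treeSegment_of_isVisible (hS _ hsS _ hsS') (Or.inl ⟨_, rfl⟩) hσS
    (by simpa [Subtype.ext_iff] using hσs) (by simpa [Subtype.ext_iff] using hσs')

theorem unblocked_internalWords_leafWords (hS : isMVSet (gluedTree r n t) S) (i : Fin n) :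
    Unblocked (internalWords S i) (leafWords S) := by
  intro s hs l hl σ hσ hσs _
  obtain ⟨hs, hsS⟩ := mem_internalWords.1 hs
  obtain ⟨hl, hlS⟩ := mem_leafWords.1 hl
  obtain ⟨hσ, hσS⟩ := mem_internalWords.1 hσ
  exact not_mem_treeSegment_of_isVisible (hS _ hsS _ hlS) (Or.inr ⟨_, rfl⟩) hσS
    (by simpa [Subtype.ext_iff] using hσs) (by simp)

theorem not_and_mem_treeSegment_of_isMVSet {S : Set (gluedVert r 2 t)}
    (hS : isMVSet (gluedTree r 2 t) S) : ∀ l ∈ leafWords S, ∀ l' ∈ leafWords S, l ≠ l' →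
      ∀ p ∈ internalWords S 0, ∀ q ∈ internalWords S 1,
        ¬ (p ∈ treeSegment l l' ∧ q ∈ treeSegment l l') := by
  intro l hl l' hl' hll' p hp q hq ⟨hpl, hql⟩
  obtain ⟨hl, hlS⟩ := mem_leafWords.1 hl
  obtain ⟨hl', hlS'⟩ := mem_leafWords.1 hl'
  obtain ⟨hp, hpS⟩ := mem_internalWords.1 hp
  obtain ⟨hq, hqS⟩ := mem_internalWords.1 hq
  refine not_isVisible_inr_inr (by simpa [Subtype.ext_iff] using hll') (fun j => ?_)
    (hS _ hlS _ hlS')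
  fin_cases j
  · exact ⟨_, hpS, hpl⟩
  · exact ⟨_, hqS, hql⟩

end Words

section MutualVisibility

variable {r t : ℕ}

theorem ncard_quasiLeaves (n : ℕ) : (quasiLeaves r n t).ncard = t ^ r := by
  have : quasiLeaves r n t = Set.range Sum.inr := by
    ext x; simp [quasiLeaves, eq_comm]
  rw [this, Set.ncard_range_of_injective Sum.inr_injective, Nat.card_eq_fintype_card,
    card_length_eq]

theorem ncard_le_pow_of_two_le_ncard_diff (hr : 2 ≤ r) (ht : 2 ≤ t) {S : Set (gluedVert r 2 t)}
    (hS : isMVSet (gluedTree r 2 t) S) (h2 : 2 ≤ (S \ quasiLeaves r 2 t).ncard) :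
    S.ncard ≤ t ^ r := by
  rw [← Set.ncard_inter_add_ncard_sdiff_eq_ncard S (quasiLeaves r 2 t), ncard_inter_quasiLeaves,
    ncard_diff_quasiLeaves, Fin.sum_univ_two] at *
  have := card_add_card_add_card_le hr ht (fun p hp => (mem_internalWords.1 hp).1)
    (fun p hp => (mem_internalWords.1 hp).1) (fun l hl => (mem_leafWords.1 hl).1)
    (unblocked_internalWords hS 0) (unblocked_internalWords hS 1)
    (unblocked_internalWords_leafWords hS 0) (unblocked_internalWords_leafWords hS 1)
    (not_and_mem_treeSegment_of_isMVSet hS) h2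
  omega

theorem ncard_le_of_isMVSet (hr : 2 ≤ r) (ht : 2 ≤ t) {S : Set (gluedVert r 2 t)}
    (hS : isMVSet (gluedTree r 2 t) S) : S.ncard ≤ t ^ r + 1 := by
  by_cases h2 : 2 ≤ (S \ quasiLeaves r 2 t).ncard
  · have := ncard_le_pow_of_two_le_ncard_diff hr ht hS h2
    omega
  · have h := Set.ncard_inter_add_ncard_sdiff_eq_ncard S (quasiLeaves r 2 t)
    have := Set.ncard_le_ncard (Set.inter_subset_right (s := S) (t := quasiLeaves r 2 t))
    rw [ncard_quasiLeaves] at this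
    omega

theorem ncard_quasiLeaves_union {n : ℕ} (x : Fin n × {l : List (Fin t) // l.length < r}) :
    (quasiLeaves r n t ∪ {.inl x}).ncard = t ^ r + 1 := by
  rw [Set.ncard_union_eq (by simp [quasiLeaves]), ncard_quasiLeaves, Set.ncard_singleton]

theorem exists_eq_quasiLeaves_union (hr : 2 ≤ r) (ht : 2 ≤ t) {S : Set (gluedVert r 2 t)}
    (hS : isMVSet (gluedTree r 2 t) S) (hcard : t ^ r + 1 ≤ S.ncard) :
    ∃ x, S = quasiLeaves r 2 t ∪ {.inl x} := by
  have h := Set.ncard_inter_add_ncard_sdiff_eq_ncard S (quasiLeaves r 2 t)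
  have hQ := Set.ncard_le_ncard (Set.inter_subset_right (s := S) (t := quasiLeaves r 2 t))
  rw [ncard_quasiLeaves] at hQ
  have h1 : (S \ quasiLeaves r 2 t).ncard = 1 := by
    have := mt (ncard_le_pow_of_two_le_ncard_diff hr ht hS)
    omega
  obtain ⟨v, hv⟩ := Set.ncard_eq_one.1 h1
  have hvS : v ∈ S \ quasiLeaves r 2 t := hv ▸ rfl
  obtain ⟨x, rfl⟩ : ∃ x, v = .inl x := by
    rcases v with x | l
    · exact ⟨x, rfl⟩
    · exact absurd ⟨l, rfl⟩ hvS.2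
  refine ⟨x, Set.eq_of_subset_of_ncard_le (fun w hw => ?_) (by rw [ncard_quasiLeaves_union]; omega)⟩
  by_cases hwQ : w ∈ quasiLeaves r 2 t
  · exact Or.inl hwQ
  · exact Or.inr (hv ▸ ⟨hw, hwQ⟩ : w ∈ ({.inl x} : Set _))

theorem quasiLeaves_union_injective (n : ℕ) :
    Function.Injective fun x : Fin n × {l : List (Fin t) // l.length < r} =>
      quasiLeaves r n t ∪ {.inl x} := by
  intro x y h
  have h' : quasiLeaves r n t ∪ {.inl x} = quasiLeaves r n t ∪ {.inl y} := h
  have : (.inl x : gluedVert r n t) ∈ quasiLeaves r n t ∪ {.inl y} := h' ▸ Or.inr rfl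
  simpa [quasiLeaves] using this

theorem card_length_lt (r : ℕ) :
    Nat.card {l : List (Fin t) // l.length < r} = ∑ d ∈ Finset.range r, t ^ d := by
  change {l : List (Fin t) | l.length < r}.ncard = _
  induction r with
  | zero => simp
  | succ r ih =>
    have : {l : List (Fin t) | l.length < r + 1} = {l | l.length < r} ∪ {l | l.length = r} := by
      ext l; simp only [Set.mem_union, Set.mem_ofPred_eq]; omega
    rw [this, Set.ncard_union_eq (Set.disjoint_left.2 fun l h1 h2 => by simp_all)
      (List.finite_length_lt _ _) (List.finite_length_eq _ _), ih, Finset.sum_range_succ,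
      ← card_length_eq r, ← Nat.card_eq_fintype_card]
    rfl

end MutualVisibility
end GluedTree

open GluedTree in
theorem stmt17 (r t : ℕ) (hr : 2 ≤ r) (ht : 2 ≤ t) :
    IsGreatest {k : ℕ | ∃ S : Set (gluedVert r 2 t),
      isMVSet (gluedTree r 2 t) S ∧ S.ncard = k} (t ^ r + 1) ∧
    {S : Set (gluedVert r 2 t) | isMVSet (gluedTree r 2 t) S ∧
        ∀ T : Set (gluedVert r 2 t), isMVSet (gluedTree r 2 t) T → T.ncard ≤ S.ncard}.ncard
      = 2 * ((t ^ r - 1) / (t - 1)) := by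
  let x₀ : Fin 2 × {l : List (Fin t) // l.length < r} := (0, ⟨[], by simp; omega⟩)
  refine ⟨⟨⟨_, isMVSet_quasiLeaves_union le_rfl x₀, ncard_quasiLeaves_union x₀⟩, ?_⟩, ?_⟩
  · rintro k ⟨S, hS, rfl⟩
    exact ncard_le_of_isMVSet hr ht hS
  have hmax : {S : Set (gluedVert r 2 t) | isMVSet (gluedTree r 2 t) S ∧
      ∀ T : Set (gluedVert r 2 t), isMVSet (gluedTree r 2 t) T → T.ncard ≤ S.ncard} =
      Set.range fun x => quasiLeaves r 2 t ∪ {.inl x} := by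
    ext S
    constructor
    · rintro ⟨hS, hmax⟩
      obtain ⟨x, hx⟩ := exists_eq_quasiLeaves_union hr ht hS
        (ncard_quasiLeaves_union x₀ ▸ hmax _ (isMVSet_quasiLeaves_union le_rfl x₀))
      exact ⟨x, hx.symm⟩
    · rintro ⟨x, rfl⟩
      exact ⟨isMVSet_quasiLeaves_union le_rfl x, fun T hT =>
        (ncard_quasiLeaves_union x).symm ▸ ncard_le_of_isMVSet hr ht hT⟩
  rw [hmax, Set.ncard_range_of_injective (quasiLeaves_union_injective 2), Nat.card_prod,
    Nat.card_eq_fintype_card (α := Fin 2), Fintype.card_fin, card_length_lt, Nat.geomSum_eq ht]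
end
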